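/- Suppose E[V − τ] < 0, so that M_∞ is P-a.s. finite. If W : Ω → [0,∞) is a measurable random variable with W ≤ M_∞ P-a.s., then for every n ≥ 0, Z_n^W ≤ M_∞ ∘ θ^n P-a.s., where Z_0^W = W and Z_{n+1}^W(ω) = φ( Z_n^W(ω), θ^n ω ). -/

import Mathlib

/-! The bound is pathwise. Since `V ≥ 0`, `φ(x, ·) ≤ ψ(x, ·)`; and `M_∞` is a supersolution of
Loynes' recursion for `ψ`: shifting by `θ` turns `S_j + V - τ` into `S_{j+1}` and `S_0 = σ + D ≥ 0`,
so `x ≤ M_∞(ω)` gives `ψ(x, ω) ≤ M_∞(θω)`. Induction on `n` carries `Z_n ≤ M_∞ ∘ θⁿ` forward. -/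

open MeasureTheory Filter

noncomputable section

variable {Ω : Type*}

/-- ψ(y, ω) = max( max( y + V ω, σ ω + D ω + V ω ) − τ ω, 0 ). -/
def psi (σ D V τ : Ω → ℝ) (y : ℝ) (ω : Ω) : ℝ :=
  max (max (y + V ω) (σ ω + D ω + V ω) - τ ω) 0

/-- φ(x, ω): the one-step workload map, defined by its four cases:
x + σ − τ if x + σ − τ > 0 and x ≤ D; x − τ if x − τ > 0 and x > D;
max(x + σ + V − τ, 0) if x + σ − τ ≤ 0 and x ≤ D; 0 if x − τ ≤ 0 and x > D. -/
def phi (σ D V τ : Ω → ℝ) (x : ℝ) (ω : Ω) : ℝ :=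
  if x ≤ D ω then
    if 0 < x + σ ω - τ ω then x + σ ω - τ ω else max (x + σ ω + V ω - τ ω) 0
  else
    if 0 < x - τ ω then x - τ ω else 0

/-- S_j(ω) = σ(θ^{-j}ω) + D(θ^{-j}ω) + Σ_{i=1}^{j} V(θ^{-i}ω) − Σ_{i=1}^{j} τ(θ^{-i}ω),
where `θi` denotes the inverse of `θ`. -/
def Sj (θi : Ω → Ω) (σ D V τ : Ω → ℝ) (j : ℕ) (ω : Ω) : ℝ :=
  σ (θi^[j] ω) + D (θi^[j] ω)
    + ∑ i ∈ Finset.Icc 1 j, V (θi^[i] ω)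
    - ∑ i ∈ Finset.Icc 1 j, τ (θi^[i] ω)

/-- M_∞ = max(0, sup_{j ≥ 1} S_j) ∈ [0,∞]. -/
def Minf (θi : Ω → Ω) (σ D V τ : Ω → ℝ) (ω : Ω) : EReal :=
  max 0 (⨆ j : ℕ, ((Sj θi σ D V τ (j + 1) ω : ℝ) : EReal))

/-- The workload sequence Z_0^W = W, Z_{n+1}^W(ω) = φ(Z_n^W(ω), θⁿω). -/
def Zseq (θf : Ω → Ω) (σ D V τ : Ω → ℝ) (W : Ω → ℝ) : ℕ → Ω → ℝ
  | 0 => W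
  | n + 1 => fun ω => phi σ D V τ (Zseq θf σ D V τ W n ω) (θf^[n] ω)

/-- The majorizing sequence Y_0^Y = Y, Y_{n+1}^Y(ω) = ψ(Y_n^Y(ω), θⁿω). -/
def Yseq (θf : Ω → Ω) (σ D V τ : Ω → ℝ) (Y : Ω → ℝ) : ℕ → Ω → ℝ
  | 0 => Y
  | n + 1 => fun ω => psi σ D V τ (Yseq θf σ D V τ Y n ω) (θf^[n] ω)

theorem EReal.iSup_add_coe_le_iff {ι : Sort*} (a : ι → EReal) (c : ℝ) (t : EReal) :
    (⨆ j, a j) + c ≤ t ↔ ∀ j, a j + c ≤ t := by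
  have hsub {b : EReal} : b ≤ t - c ↔ b + c ≤ t :=
    EReal.le_sub_iff_add_le (.inl (EReal.coe_ne_bot c)) (.inl (EReal.coe_ne_top c))
  rw [← hsub, iSup_le_iff]
  simp only [hsub]

theorem phi_le_psi (σ D V τ : Ω → ℝ) (hV0 : ∀ ω, 0 ≤ V ω) (x : ℝ) (ω : Ω) :
    phi σ D V τ x ω ≤ psi σ D V τ x ω := by
  have hV := hV0 ω
  unfold phi psi
  split_ifs with hxD hpos hpos'
  · exact le_max_of_le_left (sub_le_sub_right (le_max_of_le_right (by linarith)) _)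
  · exact max_le_max_right _ (sub_le_sub_right (le_max_of_le_right (by linarith)) _)
  · exact le_max_of_le_left (sub_le_sub_right (le_max_of_le_left (by linarith)) _)
  · exact le_max_right _ _

section Shift

variable {θf θi : Ω → Ω} (hinv : Function.LeftInverse θi θf)
include hinv

theorem iterate_succ_apply_of_leftInverse (k : ℕ) (ω : Ω) :
    θi^[k + 1] (θf ω) = θi^[k] ω := by
  rw [Function.iterate_succ_apply, hinv ω]

theorem sum_Icc_one_iterate_succ_apply (f : Ω → ℝ) (j : ℕ) (ω : Ω) :
    ∑ i ∈ Finset.Icc 1 (j + 1), f (θi^[i] (θf ω)) = f ω + ∑ i ∈ Finset.Icc 1 j, f (θi^[i] ω) := by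
  induction j with
  | zero => simp [hinv ω]
  | succ j ih =>
    rw [Finset.sum_Icc_succ_top (by omega), ih, Finset.sum_Icc_succ_top (by omega),
      iterate_succ_apply_of_leftInverse hinv, add_assoc]

theorem Sj_succ_apply (σ D V τ : Ω → ℝ) (j : ℕ) (ω : Ω) :
    Sj θi σ D V τ (j + 1) (θf ω) = Sj θi σ D V τ j ω + V ω - τ ω := by
  simp only [Sj, iterate_succ_apply_of_leftInverse hinv, sum_Icc_one_iterate_succ_apply hinv]
  ring

theorem coe_psi_le_Minf {σ D V τ : Ω → ℝ} (hσ0 : ∀ ω, 0 ≤ σ ω) (hD0 : ∀ ω, 0 ≤ D ω)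
    {x : ℝ} {ω : Ω} (hx : (x : EReal) ≤ Minf θi σ D V τ ω) :
    (psi σ D V τ x ω : EReal) ≤ Minf θi σ D V τ (θf ω) := by
  set M := Minf θi σ D V τ (θf ω)
  set c := V ω - τ ω
  have hS (j : ℕ) : ((Sj θi σ D V τ j ω + c : ℝ) : EReal) ≤ M := by
    rw [← add_sub_assoc, ← Sj_succ_apply hinv]
    exact le_max_of_le_right (le_iSup (fun j ↦ (Sj θi σ D V τ (j + 1) (θf ω) : EReal)) j)
  have hS0 : ((σ ω + D ω + c : ℝ) : EReal) ≤ M := by simpa [Sj] using hS 0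
  have hxc : ((x + c : ℝ) : EReal) ≤ M := by
    rcases le_max_iff.1 hx with hx0 | hxS
    · refine le_trans (EReal.coe_le_coe_iff.2 ?_) hS0
      linarith [EReal.coe_nonpos.1 hx0, hσ0 ω, hD0 ω]
    · rw [EReal.coe_add]
      refine (add_le_add_left hxS _).trans ((EReal.iSup_add_coe_le_iff _ _ _).2 fun j ↦ ?_)
      simpa using hS (j + 1)
  have hpsi : psi σ D V τ x ω = max (max (x + c) (σ ω + D ω + c)) 0 := by
    simp only [psi, c, ← max_sub_sub_right, add_sub_assoc]
  rw [hpsi, EReal.coe_strictMono.monotone.map_max, EReal.coe_strictMono.monotone.map_max]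
  exact max_le (max_le hxc hS0) (le_max_left _ _)

end Shift

theorem Zseq_le_Minf_shift_general
    [MeasurableSpace Ω] (P : Measure Ω)
    (θ : Ω ≃ᵐ Ω)
    (σ D V τ : Ω → ℝ)
    (hσ0 : ∀ ω, 0 ≤ σ ω) (hD0 : ∀ ω, 0 ≤ D ω) (hV0 : ∀ ω, 0 ≤ V ω)
    (W : Ω → ℝ)
    (hWMinf : ∀ᵐ ω ∂P, ((W ω : ℝ) : EReal) ≤ Minf (⇑θ.symm) σ D V τ ω) :
    ∀ n : ℕ, ∀ᵐ ω ∂P,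
      ((Zseq (⇑θ) σ D V τ W n ω : ℝ) : EReal) ≤ Minf (⇑θ.symm) σ D V τ ((⇑θ)^[n] ω) := by
  intro n
  induction n with
  | zero => simpa [Zseq] using hWMinf
  | succ n ih =>
    filter_upwards [ih] with ω hω
    rw [Function.iterate_succ_apply']
    exact (EReal.coe_le_coe_iff.2 (phi_le_psi σ D V τ hV0 _ _)).trans
      (coe_psi_le_Minf θ.symm_apply_apply hσ0 hD0 hω)

/-- if E[V − τ] < 0 and W ≤ M_∞ P-a.s., then for every n,
Z_n^W ≤ M_∞ ∘ θⁿ P-a.s. -/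
theorem Zseq_le_Minf_shift
    [MeasurableSpace Ω] (P : Measure Ω) [IsProbabilityMeasure P]
    (θ : Ω ≃ᵐ Ω) (herg : Ergodic (⇑θ) P)
    (σ D V τ : Ω → ℝ)
    (hσm : Measurable σ) (hDm : Measurable D) (hVm : Measurable V) (hτm : Measurable τ)
    (hσ0 : ∀ ω, 0 ≤ σ ω) (hD0 : ∀ ω, 0 ≤ D ω) (hV0 : ∀ ω, 0 ≤ V ω) (hτ0 : ∀ ω, 0 ≤ τ ω)
    (hσi : Integrable σ P) (hDi : Integrable D P) (hVi : Integrable V P) (hτi : Integrable τ P)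
    (hτpos : ∀ᵐ ω ∂P, 0 < τ ω)
    (hEV : ∫ ω, (V ω - τ ω) ∂P < 0)
    (W : Ω → ℝ) (hWm : Measurable W) (hW0 : ∀ ω, 0 ≤ W ω)
    (hWMinf : ∀ᵐ ω ∂P, ((W ω : ℝ) : EReal) ≤ Minf (⇑θ.symm) σ D V τ ω) :
    ∀ n : ℕ, ∀ᵐ ω ∂P,
      ((Zseq (⇑θ) σ D V τ W n ω : ℝ) : EReal) ≤ Minf (⇑θ.symm) σ D V τ ((⇑θ)^[n] ω) :=
  Zseq_le_Minf_shift_general P θ σ D V τ hσ0 hD0 hV0 W hWMinf
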